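/- arXiv:cs/0307034 — 2 statements merged into one kernel-verified Lean document; each statement's English description precedes it below -/
import Mathlib

section
/- Every finite binary tree with n ≥ 2 nodes contains an edge whose removal partitions the tree into two subtrees, each containing at most ⌈2n/3⌉ nodes (equivalently, neither side has more than 2/3 of the nodes, up to rounding). -/
/-!
Walk down from the root, always into the larger child. A subtree with at least `2k` nodes is
followed by one with at least `k`, so a walk that starts at a subtree with at least `k ≥ 1`
nodes meets one with between `k` and `2k - 1` nodes. For `n ≥ 2` the larger child of the root
has at least `⌈n/3⌉` nodes; with `k = ⌈n/3⌉`, the edge above the subtree found cuts off at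
most `2⌈n/3⌉ - 1` nodes and leaves at most `n - ⌈n/3⌉`.
-/

/-- A (rooted) binary tree: every node has at most two children. -/
inductive BTree : Type where
  | nil : BTree
  | node : BTree → BTree → BTree

/-- Number of nodes of a binary tree. -/
def BTree.size : BTree → ℕ
  | .nil => 0
  | .node l r => l.size + r.size + 1

/-- `IsProperSubtree s t` holds when `s` is the subtree hanging below some edge of
`t`, i.e. `s` is the subtree rooted at a child `v` of some node of `t`. -/
inductive BTree.IsProperSubtree : BTree → BTree → Prop where
  | left (l r : BTree) : BTree.IsProperSubtree l (.node l r)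
  | right (l r : BTree) : BTree.IsProperSubtree r (.node l r)
  | transLeft (s l r : BTree) : BTree.IsProperSubtree s l →
      BTree.IsProperSubtree s (.node l r)
  | transRight (s l r : BTree) : BTree.IsProperSubtree s r →
      BTree.IsProperSubtree s (.node l r)

namespace BTree

theorem IsProperSubtree.trans {a b c : BTree} (hab : a.IsProperSubtree b)
    (hbc : b.IsProperSubtree c) : a.IsProperSubtree c := by
  induction hbc with
  | left => exact .transLeft _ _ _ hab
  | right => exact .transRight _ _ _ hab
  | transLeft _ _ _ _ ih => exact .transLeft _ _ _ (ih hab)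
  | transRight _ _ _ _ ih => exact .transRight _ _ _ (ih hab)

theorem _root_.Relation.ReflGen.trans_isProperSubtree {a b c : BTree}
    (hab : Relation.ReflGen IsProperSubtree a b) (hbc : b.IsProperSubtree c) :
    a.IsProperSubtree c := by
  cases hab with
  | refl => exact hbc
  | single hab => exact hab.trans hbc

theorem exists_child_size_le (l r : BTree) :
    ∃ c : BTree, (c = l ∨ c = r) ∧ (node l r).size ≤ 2 * c.size + 1 := by
  rcases le_total r.size l.size with hrl | hlr
  · exact ⟨l, .inl rfl, by simp only [size]; omega⟩
  · exact ⟨r, .inr rfl, by simp only [size]; omega⟩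

theorem exists_subtree_size_mem_Ico {k : ℕ} (hk : 0 < k) (u : BTree) (hu : k ≤ u.size) :
    ∃ s : BTree, Relation.ReflGen IsProperSubtree s u ∧ k ≤ s.size ∧ s.size < 2 * k := by
  induction u with
  | nil => simp only [size] at hu; omega
  | node l r ihl ihr =>
    by_cases hsmall : (node l r).size < 2 * k
    · exact ⟨node l r, .refl, hu, hsmall⟩
    obtain ⟨c, hlr, hc⟩ := exists_child_size_le l r
    rcases hlr with rfl | rfl
    · obtain ⟨s, hsc, hks, hs2k⟩ := ihl (by omega)
      exact ⟨s, .single (hsc.trans_isProperSubtree (.left _ r)), hks, hs2k⟩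
    · obtain ⟨s, hsc, hks, hs2k⟩ := ihr (by omega)
      exact ⟨s, .single (hsc.trans_isProperSubtree (.right l _)), hks, hs2k⟩

end BTree

/-- Every binary tree with `n ≥ 2` nodes has an edge whose removal partitions it
into two parts each of size at most `⌈2n/3⌉` (equivalently, each part has at
least `n/3` of the nodes). -/
theorem btree_centroid_edge (t : BTree) (h : 2 ≤ t.size) :
    ∃ s : BTree, s.IsProperSubtree t ∧ 1 ≤ s.size ∧
      3 * s.size ≤ 2 * t.size + 2 ∧ 3 * (t.size - s.size) ≤ 2 * t.size + 2 := by
  cases t with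
  | nil => simp only [BTree.size] at h; omega
  | node l r =>
    obtain ⟨c, hlr, hc⟩ := BTree.exists_child_size_le l r
    have hct : c.IsProperSubtree (.node l r) := by
      rcases hlr with rfl | rfl
      exacts [.left _ r, .right l _]
    set k := ((BTree.node l r).size + 2) / 3
    obtain ⟨s, hsc, hks, hs2k⟩ :=
      BTree.exists_subtree_size_mem_Ico (k := k) (by omega) c (by omega)
    exact ⟨s, hsc.trans_isProperSubtree hct, by omega, by omega, by omega⟩
end

section
/- The recurrence T(n) = b·T(n/b) + c·n·(b + log n), with T(1) = O(1), satisfies T(n) = O(n·(b + log n)·log_b n) for any integer b ≥ 2. -/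
/-! Put `g(n) = (n - 1)(b + log n)`. Because `b·(⌈n/b⌉ - 1) ≤ n - 1`, one level of the recursion
satisfies `b·g(⌈n/b⌉) ≤ g(n)`, while the local cost `c·n·(b + log n)` is `O(c·g(n))` once `n ≥ b`.
Induction on `k` gives `T(n) ≤ c + 3ck·g(n)` whenever `n ≤ b^k`. Taking `k = ⌈log_b n⌉ ≤ 2 log₂ n`
and writing `log₂ n = log₂ b · log_b n` gives the bound with `C = 8c·log₂ b`. -/

open Real

noncomputable def levelCost (b n : ℕ) : ℝ := ((n : ℝ) - 1) * (b + log n)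

lemma levelCost_nonneg (b : ℕ) {n : ℕ} (hn : 1 ≤ n) : 0 ≤ levelCost b n := by
  have hn' : (1 : ℝ) ≤ n := by exact_mod_cast hn
  exact mul_nonneg (by linarith) (add_nonneg (Nat.cast_nonneg b) (log_nonneg hn'))

lemma levelCost_le (b n : ℕ) : levelCost b n ≤ n * (b + log n) := by
  have : 0 ≤ (b : ℝ) + log n := add_nonneg (Nat.cast_nonneg b) (log_natCast_nonneg n)
  unfold levelCost
  nlinarith

lemma mul_levelCost_le {b m n : ℕ} (hb : 1 ≤ b) (hm : 1 ≤ m) (hmn : b * m ≤ n + b - 1) :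
    b * levelCost b m ≤ levelCost b n := by
  have hm' : (1 : ℝ) ≤ m := by exact_mod_cast hm
  have hb' : (1 : ℝ) ≤ b := by exact_mod_cast hb
  have hmn' : (b : ℝ) * m ≤ n + b - 1 := by
    have : b * m + 1 ≤ n + b := by omega
    have : (b : ℝ) * m + 1 ≤ n + b := by exact_mod_cast this
    linarith
  have hshrink : (b : ℝ) * (m - 1) ≤ n - 1 := by linarith
  have hmle : (m : ℝ) ≤ n := by nlinarith
  have hlog : log m ≤ log n := log_le_log (by linarith) hmle
  calc (b : ℝ) * levelCost b m = (b * (m - 1)) * (b + log m) := by unfold levelCost; ring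
    _ ≤ (n - 1) * (b + log n) := by
      gcongr
      linarith [log_nonneg hm']
    _ = levelCost b n := rfl

lemma ceilDiv_le_pow {b n k : ℕ} (hb : 1 ≤ b) (hn : n ≤ b ^ (k + 1)) : (n + b - 1) / b ≤ b ^ k := by
  rw [Nat.div_le_iff_le_mul_add_pred (by omega), ← pow_succ']
  omega

lemma one_le_ceilDiv {b n : ℕ} (hb : 1 ≤ b) (hn : 1 ≤ n) : 1 ≤ (n + b - 1) / b := by
  rw [Nat.le_div_iff_mul_le (by omega)]
  omega

lemma one_le_logb_two {n : ℕ} (hn : 2 ≤ n) : 1 ≤ logb 2 n := by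
  rw [le_logb_iff_rpow_le one_lt_two (by positivity), rpow_one]
  exact_mod_cast hn

lemma clog_le_two_mul_logb {b n : ℕ} (hb : 2 ≤ b) (hn : 2 ≤ n) :
    (Nat.clog b n : ℝ) ≤ 2 * logb 2 n := by
  set k := Nat.clog b n
  have hn' : (2 : ℝ) ≤ n := by exact_mod_cast hn
  have hpow : 2 ^ (k - 1) < n :=
    (Nat.pow_le_pow_left hb _).trans_lt (Nat.pow_pred_clog_lt_self (by omega) (by omega))
  have hpred : ((k - 1 : ℕ) : ℝ) < logb 2 n := by
    rw [lt_logb_iff_rpow_lt one_lt_two (by linarith), rpow_natCast]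
    exact_mod_cast hpow
  have hone := one_le_logb_two hn
  have hk : (k : ℝ) ≤ ((k - 1 : ℕ) : ℝ) + 1 := by exact_mod_cast (by omega : k ≤ k - 1 + 1)
  linarith

theorem recurrence_le_of_le_pow {b : ℕ} {c : ℝ} {T : ℕ → ℝ} (hb : 2 ≤ b) (hc : 0 ≤ c) (hbase : ∀ n, n < b → T n ≤ c)
    (hrec : ∀ n, b ≤ n → T n ≤ b * T ((n + b - 1) / b) + c * n * (b + log n)) (k : ℕ) :
    ∀ n, 1 ≤ n → n ≤ b ^ k → T n ≤ c + 3 * c * k * levelCost b n := by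
  induction k with
  | zero =>
    intro n _ hn
    simpa using hbase n (by simp at hn; omega)
  | succ k ih =>
    intro n hn1 hnk
    by_cases hnb : n < b
    · have := levelCost_nonneg b hn1
      have := hbase n hnb
      have : 0 ≤ 3 * c * (k + 1 : ℕ) * levelCost b n := by positivity
      linarith
    replace hnb := not_lt.mp hnb
    set m := (n + b - 1) / b
    have hm1 : 1 ≤ m := one_le_ceilDiv (by omega) hn1
    have hTm := ih m hm1 (ceilDiv_le_pow (by omega) hnk)
    have hshrink : (b : ℝ) * levelCost b m ≤ levelCost b n :=
      mul_levelCost_le (by omega) hm1 (by rw [mul_comm]; exact Nat.div_mul_le_self _ _)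
    have hcost : (b : ℝ) + n * (b + log n) ≤ 1 + 3 * levelCost b n := by
      have hn : (2 : ℝ) ≤ n := by exact_mod_cast hb.trans hnb
      have hbn : (b : ℝ) ≤ n := by exact_mod_cast hnb
      have := log_natCast_nonneg n
      unfold levelCost
      nlinarith
    calc T n ≤ b * T m + c * n * (b + log n) := hrec n hnb
      _ ≤ b * (c + 3 * c * k * levelCost b m) + c * n * (b + log n) := by gcongr
      _ = c * (b + n * (b + log n)) + 3 * c * k * (b * levelCost b m) := by ring
      _ ≤ c * (1 + 3 * levelCost b n) + 3 * c * k * levelCost b n := by gcongr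
      _ = c + 3 * c * (k + 1 : ℕ) * levelCost b n := by push_cast; ring

theorem recurrence_blocks_general (b : ℕ) (hb : 2 ≤ b) (c : ℝ) (hc : 0 < c) (T : ℕ → ℝ)
    (hbase : ∀ n : ℕ, n < b → T n ≤ c)
    (hrec : ∀ n : ℕ, b ≤ n → T n ≤ b * T ((n + b - 1) / b) + c * n * (b + Real.log n)) :
    ∃ C : ℝ, ∀ n : ℕ, 2 ≤ n →
      T n ≤ C * n * (b + Real.log n) * (Real.log n / Real.log b) := by
  refine ⟨8 * c * logb 2 b, fun n hn => ?_⟩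
  have hb' : (2 : ℝ) ≤ b := by exact_mod_cast hb
  have hn' : (2 : ℝ) ≤ n := by exact_mod_cast hn
  set k := Nat.clog b n
  have hT := recurrence_le_of_le_pow hb hc.le hbase hrec k n (by omega) (Nat.le_pow_clog (by omega) n)
  have hk := clog_le_two_mul_logb hb hn
  have hlog2 := one_le_logb_two hn
  have hF : 1 ≤ n * (b + log n) := by nlinarith [log_natCast_nonneg n]
  have hchange : logb 2 b * (log n / log b) = logb 2 n :=
    mul_logb (by positivity) (by linarith) (by linarith)
  calc T n ≤ c * 1 + 3 * c * k * levelCost b n := by simpa using hT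
    _ ≤ c * (2 * logb 2 n * (n * (b + log n))) + 3 * c * (2 * logb 2 n) * (n * (b + log n)) := by
      gcongr
      · nlinarith
      · exact levelCost_nonneg b (by omega)
      · exact levelCost_le b n
    _ = 8 * c * (logb 2 b * (log n / log b)) * (n * (b + log n)) := by rw [hchange]; ring
    _ = 8 * c * logb 2 b * n * (b + log n) * (log n / log b) := by ring

/-- The recurrence `T(n) ≤ b·T(⌈n/b⌉) + c·n·(b + log n)` for `n ≥ b`, with
`T(n) ≤ c` for `n < b`, has solution `T(n) = O(n·(b + log n)·log_b n)`. -/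
theorem recurrence_blocks (b : ℕ) (hb : 2 ≤ b) (c : ℝ) (hc : 0 < c) (T : ℕ → ℝ)
    (hT0 : ∀ n : ℕ, 0 ≤ T n)
    (hbase : ∀ n : ℕ, n < b → T n ≤ c)
    (hrec : ∀ n : ℕ, b ≤ n → T n ≤ b * T ((n + b - 1) / b) + c * n * (b + Real.log n)) :
    ∃ C : ℝ, ∀ n : ℕ, 2 ≤ n →
      T n ≤ C * n * (b + Real.log n) * (Real.log n / Real.log b) :=
  recurrence_blocks_general b hb c hc T hbase hrec
end
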